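/- arXiv:1803.08277 — 8 statements merged into one kernel-verified Lean document; each statement's English description precedes it below -/
import Mathlib

section
/- The function g defined on [1,∞) by g(x) = (y + sin y)/2 − x·(y − sin y)/2, where y = arccos((x−1)/(x+1)), is monotonically decreasing. -/
/-! With `y = arccos ((x - 1) / (x + 1))` one has `1 + cos y = x (1 - cos y)`, and this relation
makes the terms containing `y'` cancel in the derivative of `g`. What is left is
`g' x = -(y - sin y) / 2`, which is nonpositive because `sin y ≤ y` for `y ≥ 0`. -/

noncomputable def g (x : ℝ) : ℝ :=
  (Real.arccos ((x - 1) / (x + 1)) + Real.sin (Real.arccos ((x - 1) / (x + 1)))) / 2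
    - x * (Real.arccos ((x - 1) / (x + 1)) - Real.sin (Real.arccos ((x - 1) / (x + 1)))) / 2

open Real Set

theorem hasDerivAt_add_sin_sub_mul_sub_sin {y : ℝ → ℝ} {y' x : ℝ} (hy : HasDerivAt y y' x)
    (hcos : 1 + cos (y x) = x * (1 - cos (y x))) :
    HasDerivAt (fun t ↦ (y t + sin (y t)) / 2 - t * (y t - sin (y t)) / 2)
      (-(y x - sin (y x)) / 2) x := by
  have hsin := hy.sin
  refine (((hy.add hsin).div_const 2).sub
    (((hasDerivAt_id' x).mul (hy.sub hsin)).div_const 2)).congr_deriv ?_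
  simp only [Pi.sub_apply]
  linear_combination (y' / 2) * hcos

theorem one_add_div_eq_mul_one_sub_div {x : ℝ} (hx : x + 1 ≠ 0) :
    1 + (x - 1) / (x + 1) = x * (1 - (x - 1) / (x + 1)) := by
  field_simp
  ring

theorem sub_one_div_add_one_mem_Ioo {x : ℝ} (hx : 1 < x) : (x - 1) / (x + 1) ∈ Ioo 0 1 :=
  ⟨div_pos (by linarith) (by linarith), (div_lt_one (by linarith)).2 (by linarith)⟩

theorem hasDerivAt_g {x : ℝ} (hx : 1 < x) :
    HasDerivAt g (-(arccos ((x - 1) / (x + 1)) - sin (arccos ((x - 1) / (x + 1)))) / 2) x := by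
  obtain ⟨hu₀, hu₁⟩ := sub_one_div_add_one_mem_Ioo hx
  have hx₁ : x + 1 ≠ 0 := by linarith
  have hu : DifferentiableAt ℝ (fun t : ℝ ↦ (t - 1) / (t + 1)) x := by
    fun_prop (disch := assumption)
  have hy : DifferentiableAt ℝ (fun t : ℝ ↦ arccos ((t - 1) / (t + 1))) x :=
    (differentiableAt_arccos.2 ⟨by linarith, hu₁.ne⟩).comp (g := arccos) x hu
  unfold g
  refine hasDerivAt_add_sin_sub_mul_sub_sin hy.hasDerivAt ?_
  rw [cos_arccos (by linarith) hu₁.le]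
  exact one_add_div_eq_mul_one_sub_div hx₁

theorem continuousOn_g : ContinuousOn g (Ici 1) := by
  unfold g
  fun_prop (disch := intro t (ht : 1 ≤ t); grind)

theorem g_antitone : AntitoneOn g (Set.Ici (1 : ℝ)) := by
  refine antitoneOn_of_hasDerivWithinAt_nonpos (convex_Ici 1) continuousOn_g
    (fun x hx ↦ (hasDerivAt_g (interior_Ici.subset hx)).hasDerivWithinAt) fun x _ ↦ ?_
  have hsin_le := sin_le (arccos_nonneg ((x - 1) / (x + 1)))
  linarith
end

section
/- The function g defined on [1,∞) by g(x) = (y + sin y)/2 − x·(y − sin y)/2, where y = arccos((x−1)/(x+1)), tends to 0 as x → ∞. -/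
/-!
Put `y = arccos ((x - 1) / (x + 1))`, so that `1 - cos y = 2 / (x + 1)`. The quadratic lower
bound `1 - cos y ≥ 2 y² / π²` on `[0, π]` gives `x y² ≤ π²`, and with `|y - sin y| ≤ |y|³ / 6`
this yields `|x (y - sin y)| ≤ π² |y| / 6`. Since `y → 0`, both halves of `g` tend to `0`.
-/

open Real Filter Topology

lemma arccos_sq_le_mul_one_sub {t : ℝ} (ht₀ : -1 ≤ t) (ht₁ : t ≤ 1) :
    arccos t ^ 2 ≤ π ^ 2 / 2 * (1 - t) := by
  have hcos := cos_le_one_sub_mul_cos_sq (x := arccos t)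
    (by rw [abs_of_nonneg (arccos_nonneg t)]; exact arccos_le_pi t)
  rw [cos_arccos ht₀ ht₁] at hcos
  rw [div_mul_eq_mul_div, le_div_iff₀ two_pos]
  calc arccos t ^ 2 * 2 = π ^ 2 * (2 / π ^ 2 * arccos t ^ 2) := by field_simp
    _ ≤ π ^ 2 * (1 - t) := by gcongr; linarith

lemma abs_mul_arccos_sq_le {x : ℝ} (hx : 0 ≤ x) :
    |x| * arccos ((x - 1) / (x + 1)) ^ 2 ≤ π ^ 2 := by
  have hx₁ : 0 < x + 1 := by linarith
  have hsq := arccos_sq_le_mul_one_sub (t := (x - 1) / (x + 1))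
    (by rw [le_div_iff₀ hx₁]; linarith) (by rw [div_le_one hx₁]; linarith)
  have h_one_sub : 1 - (x - 1) / (x + 1) = 2 / (x + 1) := by field_simp; ring
  rw [h_one_sub] at hsq
  calc |x| * arccos ((x - 1) / (x + 1)) ^ 2 ≤ x * (π ^ 2 / 2 * (2 / (x + 1))) := by
        rw [abs_of_nonneg hx]; gcongr
    _ = π ^ 2 * (x / (x + 1)) := by field_simp
    _ ≤ π ^ 2 * 1 := by gcongr; rw [div_le_one hx₁]; linarith
    _ = π ^ 2 := mul_one _

lemma tendsto_sub_one_div_add_one_atTop :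
    Tendsto (fun x : ℝ => (x - 1) / (x + 1)) atTop (𝓝 1) := by
  have h : Tendsto (fun x : ℝ => 1 - 2 / (x + 1)) atTop (𝓝 (1 - 0)) :=
    tendsto_const_nhds.sub <|
      tendsto_const_nhds.div_atTop (tendsto_atTop_add_const_right _ _ tendsto_id)
  rw [sub_zero] at h
  refine h.congr' ?_
  filter_upwards [eventually_gt_atTop (0 : ℝ)] with x hx
  field_simp
  ring

lemma tendsto_mul_sub_sin_of_abs_mul_sq_le {α : Type*} {l : Filter α} {f y : α → ℝ} {C : ℝ}
    (hy : Tendsto y l (𝓝 0)) (hf : ∀ᶠ a in l, |f a| * y a ^ 2 ≤ C) :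
    Tendsto (fun a => f a * (y a - sin (y a))) l (𝓝 0) := by
  have hbound : Tendsto (fun a => C * |y a| / 6) l (𝓝 0) := by
    simpa using (hy.abs.const_mul C).div_const 6
  refine squeeze_zero_norm' ?_ hbound
  filter_upwards [hf] with a ha
  calc ‖f a * (y a - sin (y a))‖ = |f a| * |y a - sin (y a)| := by
        rw [Real.norm_eq_abs, abs_mul]
    _ ≤ |f a| * (|y a| ^ 3 / 6) := by gcongr; exact abs_sub_sin_le _
    _ = |f a| * y a ^ 2 * |y a| / 6 := by rw [← sq_abs (y a)]; ring
    _ ≤ C * |y a| / 6 := by gcongr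

theorem g_tendsto_zero : Filter.Tendsto g Filter.atTop (nhds 0) := by
  have hy : Tendsto (fun x : ℝ => arccos ((x - 1) / (x + 1))) atTop (𝓝 0) :=
    arccos_one ▸ (continuous_arccos.tendsto 1).comp tendsto_sub_one_div_add_one_atTop
  have hsin : Tendsto (fun x : ℝ => sin (arccos ((x - 1) / (x + 1)))) atTop (𝓝 0) :=
    sin_zero ▸ (continuous_sin.tendsto 0).comp hy
  have hmul : Tendsto (fun x : ℝ => x * (arccos ((x - 1) / (x + 1)) -
      sin (arccos ((x - 1) / (x + 1))))) atTop (𝓝 0) :=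
    tendsto_mul_sub_sin_of_abs_mul_sq_le hy <|
      (eventually_ge_atTop 0).mono fun x hx => abs_mul_arccos_sq_le hx
  have hg := ((hy.add hsin).div_const 2).sub (hmul.div_const 2)
  rwa [add_zero, zero_div, sub_zero] at hg
end

section
/- Let G be a connected weighted undirected graph with incidence matrix B and positive weight matrix 𝒜. Let z = x + iy ∈ ℂ^n with ‖Bᵀz‖_∞ ≤ γ < π/2 (entrywise complex modulus). Then the complex matrix L_{cos(z)} := B𝒜[cos(Bᵀz)]Bᵀ has rank n−1. -/
/-!
Since `B` is real, `L_{cos z} = C D Cᴴ` with `C = B` viewed over `ℂ` and `D = diag(aₑ cos wₑ)`,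
`w = Bᵀz`. For `|Re w| < π/2` we have `Re cos w = cos (Re w) cosh (Im w) > 0`, so
`Re (v* L v) = ∑ₑ Re Dₑ |(Cᴴv)ₑ|²` vanishes only when `Cᴴv = 0`. Hence `ker L = ker Bᵀ`, which
connectivity makes the line of constant vectors, and rank–nullity gives rank `n - 1`.
-/

open Matrix

theorem Complex.cos_re (z : ℂ) : (Complex.cos z).re = Real.cos z.re * Real.cosh z.im := by
  rw [Complex.cos_eq]
  simp [Complex.cos_ofReal_re, Complex.cosh_ofReal_re, Complex.sin_ofReal_im,
    Complex.sinh_ofReal_im, Complex.cos_ofReal_im, Complex.cosh_ofReal_im]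

theorem Complex.cos_re_pos_of_abs_re_lt {z : ℂ} (hz : |z.re| < Real.pi / 2) :
    0 < (Complex.cos z).re := by
  rw [Complex.cos_re]
  exact mul_pos (Real.cos_pos_of_mem_Ioo (abs_lt.mp hz)) (Real.cosh_pos _)

namespace Matrix

variable {ι κ : Type*}

theorem conjTranspose_map_ofReal (B : Matrix ι κ ℝ) :
    (B.map Complex.ofReal)ᴴ = Bᵀ.map Complex.ofReal := by
  rw [← conjTranspose_map _ fun x => (Complex.conj_ofReal x).symm,
    conjTranspose_eq_transpose_of_trivial]

theorem transpose_mulVec_one_eq_zero {R : Type*} [NonAssocRing R] [Fintype ι]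
    (B : Matrix ι κ R) (hB : ∀ e, ∃ i j, i ≠ j ∧ B i e = 1 ∧ B j e = -1 ∧
      ∀ k, k ≠ i → k ≠ j → B k e = 0) : Bᵀ *ᵥ 1 = 0 := by
  funext e
  obtain ⟨i, j, hij, hi, hj, hzero⟩ := hB e
  have hsum : ∑ k, B k e = B i e + B j e :=
    Fintype.sum_eq_add i j hij fun k hk => hzero k hk.1 hk.2
  simp [mulVec, dotProduct, hsum, hi, hj]

theorem rank_eq_card_sub_one_of_ker_eq_span_one {K : Type*} [Field K] [Fintype ι]
    (A : Matrix ι ι K) (hA : LinearMap.ker A.mulVecLin = Submodule.span K {1}) :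
    A.rank = Fintype.card ι - 1 := by
  rcases isEmpty_or_nonempty ι with hι | hι
  · simpa using A.rank_le_card_height
  have hker : Module.finrank K (LinearMap.ker A.mulVecLin) = 1 := by
    rw [hA]
    exact finrank_span_singleton one_ne_zero
  have hrank := LinearMap.finrank_range_add_finrank_ker A.mulVecLin
  rw [hker, Module.finrank_fintype_fun_eq_card] at hrank
  rw [rank]
  omega

variable [Fintype κ]

theorem re_map_ofReal_mulVec (B : Matrix ι κ ℝ) (v : κ → ℂ) (i : ι) :
    ((B.map Complex.ofReal *ᵥ v) i).re = (B *ᵥ fun j => (v j).re) i := by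
  simp [mulVec, dotProduct, Complex.re_sum]

theorem im_map_ofReal_mulVec (B : Matrix ι κ ℝ) (v : κ → ℂ) (i : ι) :
    ((B.map Complex.ofReal *ᵥ v) i).im = (B *ᵥ fun j => (v j).im) i := by
  simp [mulVec, dotProduct, Complex.im_sum]

theorem ker_mulVecLin_map_ofReal (B : Matrix ι κ ℝ)
    (hconn : ∀ v : κ → ℝ, B *ᵥ v = 0 → ∃ c, ∀ j, v j = c) (hone : B *ᵥ 1 = 0) :
    LinearMap.ker (B.map Complex.ofReal).mulVecLin = Submodule.span ℂ {1} := by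
  ext v
  rw [LinearMap.mem_ker, mulVecLin_apply, Submodule.mem_span_singleton]
  constructor
  · intro hv
    obtain ⟨x, hx⟩ := hconn _ (funext fun i => by rw [← re_map_ofReal_mulVec, hv]; rfl)
    obtain ⟨y, hy⟩ := hconn _ (funext fun i => by rw [← im_map_ofReal_mulVec, hv]; rfl)
    exact ⟨⟨x, y⟩, funext fun j => Complex.ext (by simp [hx]) (by simp [hy])⟩
  · rintro ⟨c, rfl⟩
    have hone' : B.map Complex.ofReal *ᵥ 1 = 0 := funext fun i => by
      have := (Complex.ofRealHom.map_mulVec B 1 i).symm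
      rw [hone] at this
      exact this
    rw [mulVec_smul, hone', smul_zero]

variable {𝕜 : Type*} [RCLike 𝕜] [Fintype ι] [DecidableEq κ]

theorem star_dotProduct_mul_diagonal_mul_conjTranspose_mulVec (C : Matrix ι κ 𝕜) (d : κ → 𝕜)
    (v : ι → 𝕜) :
    star v ⬝ᵥ (C * diagonal d * Cᴴ) *ᵥ v = ∑ e, d e * (‖(Cᴴ *ᵥ v) e‖ ^ 2 : 𝕜) := by
  rw [← mulVec_mulVec, ← mulVec_mulVec, dotProduct_mulVec, ← conjTranspose_conjTranspose C,
    ← star_mulVec, conjTranspose_conjTranspose]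
  refine Finset.sum_congr rfl fun e _ => ?_
  rw [mulVec_diagonal, Pi.star_apply, RCLike.star_def, ← RCLike.conj_mul]
  ring

theorem ker_mulVecLin_mul_diagonal_mul_conjTranspose (C : Matrix ι κ 𝕜) {d : κ → 𝕜}
    (hd : ∀ e, 0 < RCLike.re (d e)) :
    LinearMap.ker (C * diagonal d * Cᴴ).mulVecLin = LinearMap.ker Cᴴ.mulVecLin := by
  ext v
  simp only [LinearMap.mem_ker, mulVecLin_apply]
  refine ⟨fun h => ?_, fun h => by rw [← mulVec_mulVec, h, mulVec_zero]⟩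
  have hsum : ∑ e, RCLike.re (d e) * ‖(Cᴴ *ᵥ v) e‖ ^ 2 = 0 := by
    have hre := congrArg RCLike.re (star_dotProduct_mul_diagonal_mul_conjTranspose_mulVec C d v)
    rw [h, dotProduct_zero, map_zero, map_sum] at hre
    refine (Finset.sum_congr rfl fun e _ => ?_).trans hre.symm
    rw [← RCLike.ofReal_pow, RCLike.re_mul_ofReal]
  have hterm := (Finset.sum_eq_zero_iff_of_nonneg fun e _ =>
    mul_nonneg (hd e).le (sq_nonneg ‖(Cᴴ *ᵥ v) e‖)).mp hsum
  funext e
  simpa [(hd e).ne'] using hterm e (Finset.mem_univ e)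

end Matrix

theorem rank_complex_cos_laplacian
    (n m : ℕ) (B : Matrix (Fin n) (Fin m) ℝ) (a : Fin m → ℝ)
    (ha : ∀ e, 0 < a e)
    (hB : ∀ e : Fin m, ∃ i j : Fin n, i ≠ j ∧ B i e = 1 ∧ B j e = -1 ∧
      ∀ k, k ≠ i → k ≠ j → B k e = 0)
    (hconn : ∀ v : Fin n → ℝ, B.transpose.mulVec v = 0 → ∃ c, ∀ i, v i = c)
    (γ : ℝ) (hγ : γ < Real.pi / 2)
    (z : Fin n → ℂ)
    (hz : ∀ e, ‖(B.map (Complex.ofReal)).transpose.mulVec z e‖ ≤ γ) :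
    ((B.map (Complex.ofReal)) * Matrix.diagonal (fun e => (a e : ℂ)) *
      Matrix.diagonal (fun e => Complex.cos ((B.map (Complex.ofReal)).transpose.mulVec z e)) *
      (B.map (Complex.ofReal)).transpose).rank = n - 1 := by
  set C := B.map Complex.ofReal
  set w := Cᵀ *ᵥ z
  have hweight : ∀ e, 0 < ((a e : ℂ) * Complex.cos (w e)).re := fun e => by
    rw [Complex.re_ofReal_mul]
    exact mul_pos (ha e) (Complex.cos_re_pos_of_abs_re_lt
      (((Complex.abs_re_le_norm _).trans (hz e)).trans_lt hγ))
  have hL : C * diagonal (fun e => (a e : ℂ)) * diagonal (fun e => Complex.cos (w e)) * Cᵀ =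
      C * diagonal (fun e => a e * Complex.cos (w e)) * Cᴴ := by
    rw [Matrix.mul_assoc C, diagonal_mul_diagonal, conjTranspose_map_ofReal, transpose_map]
  rw [hL]
  refine (rank_eq_card_sub_one_of_ker_eq_span_one _ ?_).trans
    (congrArg (· - 1) (Fintype.card_fin n))
  rw [ker_mulVecLin_mul_diagonal_mul_conjTranspose C hweight, conjTranspose_map_ofReal]
  exact ker_mulVecLin_map_ofReal Bᵀ hconn (transpose_mulVec_one_eq_zero B hB)
end

section
/- Let G be a connected weighted undirected graph with incidence matrix B, positive weight matrix 𝒜, Laplacian L = B𝒜Bᵀ, and cutset projection 𝒫 = BᵀL†B𝒜. The Kuramoto map f_K(x) = 𝒫 sin(Bᵀx), defined on the set S = {x ∈ 1ₙ^⊥ : ‖Bᵀx‖_∞ ≤ γ} with γ ∈ [0, π/2), is injective. -/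
open Matrix

private lemma ker_subset {n m : ℕ} (B : Matrix (Fin n) (Fin m) ℝ) (a : Fin m → ℝ)
    (ha : ∀ e, 0 < a e) (z : Fin n → ℝ)
    (hz : (B * Matrix.diagonal a * B.transpose).mulVec z = 0) :
    B.transpose.mulVec z = 0 := by
  set s := B.transpose.mulVec z with hs
  have h1 : (B * Matrix.diagonal a * B.transpose).mulVec z
      = B.mulVec ((Matrix.diagonal a).mulVec s) := by
    simp only [hs, mulVec_mulVec, Matrix.mul_assoc]
  have h0 : z ⬝ᵥ (B * Matrix.diagonal a * B.transpose).mulVec z = 0 := by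
    rw [hz]; simp
  have h2 : z ⬝ᵥ (B * Matrix.diagonal a * B.transpose).mulVec z
      = ∑ e, a e * s e ^ 2 := by
    rw [h1, dotProduct_mulVec, ← mulVec_transpose, ← hs]
    simp [dotProduct, mulVec_diagonal]
    apply Finset.sum_congr rfl
    intro e _
    ring
  have h3 : ∑ e, a e * s e ^ 2 = 0 := by rw [← h2, h0]
  have h4 : ∀ e ∈ Finset.univ, a e * s e ^ 2 = 0 :=
    (Finset.sum_eq_zero_iff_of_nonneg
      (fun e _ => mul_nonneg (le_of_lt (ha e)) (sq_nonneg _))).mp h3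
  funext e
  have := h4 e (Finset.mem_univ e)
  have hae := ha e
  have : s e ^ 2 = 0 := by
    rcases mul_eq_zero.mp this with h | h
    · exact absurd h (ne_of_gt hae)
    · exact h
  simpa [hs] using pow_eq_zero_iff (n := 2) (by norm_num) |>.mp this

theorem kuramoto_map_injective
    (n m : ℕ) (B : Matrix (Fin n) (Fin m) ℝ) (a : Fin m → ℝ)
    (ha : ∀ e, 0 < a e)
    (hB : ∀ e : Fin m, ∃ i j : Fin n, i ≠ j ∧ B i e = 1 ∧ B j e = -1 ∧
      ∀ k, k ≠ i → k ≠ j → B k e = 0)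
    (hconn : ∀ v : Fin n → ℝ, B.transpose.mulVec v = 0 → ∃ c, ∀ i, v i = c)
    -- L† : the Moore–Penrose pseudoinverse of the Laplacian L = B𝒜Bᵀ
    (Ldag : Matrix (Fin n) (Fin n) ℝ)
    (hP1 : (B * Matrix.diagonal a * B.transpose) * Ldag * (B * Matrix.diagonal a * B.transpose)
            = B * Matrix.diagonal a * B.transpose)
    (hP2 : Ldag * (B * Matrix.diagonal a * B.transpose) * Ldag = Ldag)
    (hP3 : ((B * Matrix.diagonal a * B.transpose) * Ldag).transpose
            = (B * Matrix.diagonal a * B.transpose) * Ldag)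
    (hP4 : (Ldag * (B * Matrix.diagonal a * B.transpose)).transpose
            = Ldag * (B * Matrix.diagonal a * B.transpose))
    (γ : ℝ) (hγ0 : 0 ≤ γ) (hγ : γ < Real.pi / 2) :
    Set.InjOn
      (fun x : Fin n → ℝ =>
        (B.transpose * Ldag * B * Matrix.diagonal a).mulVec
          (fun e => Real.sin (B.transpose.mulVec x e)))
      {x : Fin n → ℝ | (∑ i, x i) = 0 ∧ ∀ e, |B.transpose.mulVec x e| ≤ γ} := by
  intro x hx y hy hxy
  rcases Nat.eq_zero_or_pos n with hn | hn
  · subst hn; funext i; exact i.elim0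
  simp only [Set.mem_setOf_eq] at hx hy
  set D := Matrix.diagonal a with hD
  set L := B * D * B.transpose with hLdef
  have hLsymm : L.transpose = L := by
    rw [hLdef, Matrix.transpose_mul, Matrix.transpose_mul, Matrix.transpose_transpose,
      Matrix.diagonal_transpose, Matrix.mul_assoc]
  set P := L * Ldag with hPdef
  have hPsymm : P.transpose = P := hP3
  -- column sums of B vanish
  have hBsum : ∀ e, ∑ i, B i e = 0 := by
    intro e
    obtain ⟨i, j, hij, hBi, hBj, hBk⟩ := hB e
    rw [← Finset.sum_subset (Finset.subset_univ ({i, j} : Finset (Fin n)))]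
    · rw [Finset.sum_insert (by simpa using hij), Finset.sum_singleton, hBi, hBj]; ring
    · intro k _ hk
      simp only [Finset.mem_insert, Finset.mem_singleton, not_or] at hk
      exact hBk k hk.1 hk.2
  have hBt1 : B.transpose.mulVec (fun _ => (1:ℝ)) = 0 := by
    funext e
    simp only [mulVec, dotProduct, Matrix.transpose_apply, mul_one]
    exact hBsum e
  have hL1 : L.mulVec (fun _ => (1:ℝ)) = 0 := by
    rw [hLdef, Matrix.mul_assoc, ← mulVec_mulVec, ← mulVec_mulVec, hBt1]
    simp
  set w := x - y with hw
  have hwsum : ∑ i, w i = 0 := by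
    simp [hw, Finset.sum_sub_distrib, hx.1, hy.1]
  -- LP = L
  have hLP : L * P = L := by
    have hPL : P * L = L := hP1
    calc L * P = (P.transpose * L.transpose).transpose := by
          rw [← Matrix.transpose_mul, Matrix.transpose_transpose]
      _ = (P * L).transpose := by rw [hPsymm, hLsymm]
      _ = L := by rw [hPL, hLsymm]
  -- P w = w
  have hPw : P.mulVec w = w := by
    have hker : L.mulVec (P.mulVec w - w) = 0 := by
      rw [Matrix.mulVec_sub, mulVec_mulVec, hLP, sub_self]
    have hBker := ker_subset B a ha _ hker
    obtain ⟨c, hc⟩ := hconn _ hBker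
    have hsumP : ∑ i, P.mulVec w i = 0 := by
      have h1L : (fun _ => (1:ℝ)) ᵥ* L = 0 := by
        rw [← hLsymm, vecMul_transpose]
        exact hL1
      have : (fun _ => (1:ℝ)) ⬝ᵥ P.mulVec w = 0 := by
        rw [dotProduct_mulVec, hPdef, ← vecMul_vecMul, h1L]
        simp
      simpa [dotProduct] using this
    have hsum0 : ∑ i, (P.mulVec w - w) i = 0 := by
      simp [Finset.sum_sub_distrib, hsumP, hwsum]
    have : (n : ℝ) * c = 0 := by
      rw [← hsum0]
      simp [hc, Finset.sum_const, mul_comm]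
    have hc0 : c = 0 := by
      rcases mul_eq_zero.mp this with h | h
      · exact absurd h (by positivity)
      · exact h
    have : P.mulVec w - w = 0 := by funext i; rw [Pi.zero_apply, hc i, hc0]
    exact sub_eq_zero.mp this
  -- the sine vectors
  set u : Fin m → ℝ := fun e => Real.sin (B.transpose.mulVec x e) with hu
  set v : Fin m → ℝ := fun e => Real.sin (B.transpose.mulVec y e) with hv
  set M := B.transpose * Ldag * B * D with hM
  have hMuv : M.mulVec (u - v) = 0 := by
    rw [Matrix.mulVec_sub]
    have : M.mulVec u = M.mulVec v := hxy
    rw [this, sub_self]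
  -- key scalar identity
  have hkey : w ⬝ᵥ (B * D).mulVec (u - v) = 0 := by
    have hvecP : w ᵥ* P = w := by
      rw [← mulVec_transpose, hPsymm, hPw]
    have hassoc : P * (B * D) = (B * D) * M := by
      rw [hPdef, hLdef, hM]
      simp only [Matrix.mul_assoc]
    calc w ⬝ᵥ (B * D).mulVec (u - v)
        = w ᵥ* (B * D) ⬝ᵥ (u - v) := dotProduct_mulVec _ _ _
      _ = (w ᵥ* P) ᵥ* (B * D) ⬝ᵥ (u - v) := by rw [hvecP]
      _ = w ᵥ* (P * (B * D)) ⬝ᵥ (u - v) := by rw [vecMul_vecMul]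
      _ = w ᵥ* ((B * D) * M) ⬝ᵥ (u - v) := by rw [hassoc]
      _ = (w ᵥ* (B * D)) ᵥ* M ⬝ᵥ (u - v) := by rw [vecMul_vecMul]
      _ = (w ᵥ* (B * D)) ⬝ᵥ M.mulVec (u - v) := (dotProduct_mulVec _ _ _).symm
      _ = 0 := by rw [hMuv]; simp
  -- rewrite as a sum
  set s := B.transpose.mulVec w with hsdef
  have hsum : ∑ e, a e * s e * (u e - v e) = 0 := by
    rw [← hkey]
    rw [dotProduct_mulVec, ← vecMul_vecMul, ← Matrix.mulVec_transpose B w, ← hsdef]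
    simp only [dotProduct, vecMul_diagonal, hD, Pi.sub_apply]
    apply Finset.sum_congr rfl
    intro e _
    ring
  -- each summand is nonnegative
  have hmem : ∀ (z : Fin n → ℝ), (∀ e, |B.transpose.mulVec z e| ≤ γ) →
      ∀ e, B.transpose.mulVec z e ∈ Set.Icc (-(Real.pi/2)) (Real.pi/2) := by
    intro z hz e
    have := abs_le.mp (hz e)
    constructor <;> linarith
  have hse : ∀ e, s e = B.transpose.mulVec x e - B.transpose.mulVec y e := by
    intro e
    rw [hsdef, hw, Matrix.mulVec_sub, Pi.sub_apply]
  have hnonneg : ∀ e ∈ Finset.univ, 0 ≤ a e * s e * (u e - v e) := by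
    intro e _
    have hpm := hmem x hx.2 e
    have hqm := hmem y hy.2 e
    have hmono : 0 ≤ (B.transpose.mulVec x e - B.transpose.mulVec y e)
        * (Real.sin (B.transpose.mulVec x e) - Real.sin (B.transpose.mulVec y e)) := by
      rcases lt_trichotomy (B.transpose.mulVec x e) (B.transpose.mulVec y e) with h | h | h
      · have := Real.strictMonoOn_sin hpm hqm h
        nlinarith
      · rw [h]; simp
      · have := Real.strictMonoOn_sin hqm hpm h
        nlinarith
    rw [hse e]
    simp only [hu, hv]
    nlinarith [mul_nonneg (le_of_lt (ha e)) hmono]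
  -- hence each summand vanishes and Bᵀx = Bᵀy
  have hzero : ∀ e ∈ Finset.univ, a e * s e * (u e - v e) = 0 :=
    (Finset.sum_eq_zero_iff_of_nonneg hnonneg).mp hsum
  have hs0 : s = 0 := by
    funext e
    simp only [Pi.zero_apply]
    by_contra hne
    have hpm := hmem x hx.2 e
    have hqm := hmem y hy.2 e
    have hpq : B.transpose.mulVec x e ≠ B.transpose.mulVec y e := by
      intro h
      exact hne (by rw [hse e]; exact sub_eq_zero.mpr h)
    have hpos : 0 < (B.transpose.mulVec x e - B.transpose.mulVec y e)
        * (Real.sin (B.transpose.mulVec x e) - Real.sin (B.transpose.mulVec y e)) := by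
      rcases lt_or_gt_of_ne hpq with h | h
      · have := Real.strictMonoOn_sin hpm hqm h
        nlinarith
      · have := Real.strictMonoOn_sin hqm hpm h
        nlinarith
    have hz := hzero e (Finset.mem_univ e)
    rw [hse e] at hz
    simp only [hu, hv] at hz
    have := mul_pos (ha e) hpos
    nlinarith
  -- w is constant with zero sum, hence zero
  obtain ⟨c, hc⟩ := hconn w (by rw [← hsdef, hs0])
  have hnc : (n : ℝ) * c = 0 := by
    rw [← hwsum]
    simp [hc, Finset.sum_const, mul_comm]
  have hc0 : c = 0 := by
    rcases mul_eq_zero.mp hnc with h | h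
    · exact absurd h (by positivity)
    · exact h
  have : w = 0 := by funext i; rw [Pi.zero_apply, hc i, hc0]
  have := sub_eq_zero.mp (hw ▸ this)
  exact this
end

section
/- Let G be a connected weighted undirected graph with incidence matrix B, positive weight matrix 𝒜, and cutset projection 𝒫 = BᵀL†B𝒜. For every x in D^G(γ) = {x ∈ 1ₙ^⊥ : ‖Bᵀx‖_∞ ≤ γ} with γ ∈ [0, π/2), the differential of the Kuramoto map f_K(x) = 𝒫 sin(Bᵀx), viewed as a linear map from 1ₙ^⊥ to Img(Bᵀ), namely v ↦ 𝒫[cos(Bᵀx)]Bᵀv, is injective (hence an isomorphism onto Img(Bᵀ)). -/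
/-!
Write `L = B𝒜Bᵀ` and `c = cos(Bᵀx)`, which is positive because `|Bᵀx| < π/2` edgewise.
Since `L L†` is symmetric and fixes `L`, it fixes `B` as well, so applying `B𝒜` to
`Bᵀ L† B 𝒜 [c] Bᵀ v = 0` gives `B 𝒜 [c] Bᵀ v = 0`, whence `Bᵀ v = 0` by positivity of the
weights `𝒜 [c]`. Thus the differential has the same kernel as `Bᵀ`, namely the constants, and
(by rank–nullity) the same image `Img(Bᵀ)`; constants meet `1ₙ^⊥` only in `0`, and adding a
constant to a preimage moves it into `1ₙ^⊥`.
-/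

open Matrix

section LinearAlgebra

variable {K V W : Type*} [Field K] [AddCommGroup V] [Module K V] [AddCommGroup W] [Module K W]
  [FiniteDimensional K V]

theorem LinearMap.range_eq_of_ker_eq_of_range_le {f g : V →ₗ[K] W}
    (hker : LinearMap.ker f = LinearMap.ker g) (hle : LinearMap.range f ≤ LinearMap.range g) :
    LinearMap.range f = LinearMap.range g := by
  refine Submodule.eq_of_le_of_finrank_eq hle ?_
  have hf := f.finrank_range_add_finrank_ker
  have hg := g.finrank_range_add_finrank_ker
  rw [hker] at hf
  omega

end LinearAlgebra

namespace Matrix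

variable {ι κ : Type*} [Fintype ι]

theorem range_mulVecLin_mul_mul_eq [Fintype κ] {Y : Matrix κ ι ℝ} {K : Matrix ι κ ℝ}
    (h : ∀ v, (Y * K * Y) *ᵥ v = 0 → Y *ᵥ v = 0) :
    LinearMap.range (Y * K * Y).mulVecLin = LinearMap.range Y.mulVecLin := by
  rw [Matrix.mul_assoc, mulVecLin_mul, mulVecLin_mul]
  refine LinearMap.range_eq_of_ker_eq_of_range_le (le_antisymm (fun v hv => h v ?_) ?_)
    (LinearMap.range_comp_le_range _ _)
  · simpa [← mulVecLin_mul, Matrix.mul_assoc] using hv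
  · exact (LinearMap.ker_le_ker_comp _ _).trans (LinearMap.ker_le_ker_comp _ _)

def IsIncidence (B : Matrix ι κ ℝ) : Prop :=
  ∀ e : κ, ∃ i j : ι, i ≠ j ∧ B i e = 1 ∧ B j e = -1 ∧ ∀ k, k ≠ i → k ≠ j → B k e = 0

theorem IsIncidence.sum_apply_eq_zero {B : Matrix ι κ ℝ} (hB : B.IsIncidence) (e : κ) :
    ∑ i, B i e = 0 := by
  obtain ⟨i, j, hij, hi, hj, hzero⟩ := hB e
  rw [Fintype.sum_eq_add i j hij fun k hk => hzero k hk.1 hk.2, hi, hj, add_neg_cancel]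

theorem transpose_mulVec_const_eq_zero {B : Matrix ι κ ℝ} (hcol : ∀ e, ∑ i, B i e = 0) (t : ℝ) :
    Bᵀ *ᵥ (fun _ => t) = 0 := by
  funext e
  simp [mulVec, dotProduct, ← Finset.sum_mul, hcol]

section WeightedGram

variable [Fintype κ] [DecidableEq κ]

theorem transpose_mulVec_eq_zero_of_dotProduct_mul_diagonal_mul_transpose_mulVec
    {X : Matrix ι κ ℝ} {d : κ → ℝ} (hd : ∀ e, 0 < d e) {z : ι → ℝ}
    (h : z ⬝ᵥ (X * diagonal d * Xᵀ) *ᵥ z = 0) : Xᵀ *ᵥ z = 0 := by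
  rw [← mulVec_mulVec, ← mulVec_mulVec, dotProduct_mulVec, ← mulVec_transpose] at h
  by_contra hne
  have hpos := (posDef_diagonal_iff.mpr hd).dotProduct_mulVec_pos hne
  rw [star_trivial] at hpos
  exact hpos.ne' h

theorem eq_zero_of_mul_diagonal_mul_transpose_eq_zero {X : Matrix ι κ ℝ} {d : κ → ℝ}
    (hd : ∀ e, 0 < d e) (h : X * diagonal d * Xᵀ = 0) : X = 0 := by
  classical
  have hXt : Xᵀ = 0 := ext_of_mulVec_single fun i => by
    rw [zero_mulVec]
    exact transpose_mulVec_eq_zero_of_dotProduct_mul_diagonal_mul_transpose_mulVec hd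
      (by rw [h, zero_mulVec, dotProduct_zero])
  simpa using congrArg transpose hXt

/-- With `Y = P X - X` one computes `Y [d] Yᵀ = 0`. -/
theorem mul_eq_self_of_mul_diagonal_gram_eq {X : Matrix ι κ ℝ} {d : κ → ℝ} (hd : ∀ e, 0 < d e)
    {P : Matrix ι ι ℝ} (hP : P.IsSymm) (h : P * (X * diagonal d * Xᵀ) = X * diagonal d * Xᵀ) :
    P * X = X := by
  have hP' : Pᵀ = P := hP
  have hgram : (P * X - X) * diagonal d * (P * X - X)ᵀ = 0 := by
    have h' : P * X * diagonal d * Xᵀ = X * diagonal d * Xᵀ := by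
      simpa only [Matrix.mul_assoc] using h
    rw [transpose_sub, transpose_mul, hP', Matrix.sub_mul, Matrix.sub_mul, Matrix.mul_sub,
      Matrix.mul_sub]
    simp only [← Matrix.mul_assoc, h', sub_self]
  exact sub_eq_zero.mp (eq_zero_of_mul_diagonal_mul_transpose_eq_zero hd hgram)

theorem transpose_mulVec_eq_zero_of_mulVec_eq_zero {B : Matrix ι κ ℝ} {a c : κ → ℝ}
    (ha : ∀ e, 0 < a e) (hc : ∀ e, 0 < c e) {Ldag : Matrix ι ι ℝ}
    (hP1 : (B * diagonal a * Bᵀ) * Ldag * (B * diagonal a * Bᵀ) = B * diagonal a * Bᵀ)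
    (hP3 : ((B * diagonal a * Bᵀ) * Ldag)ᵀ = (B * diagonal a * Bᵀ) * Ldag) {v : ι → ℝ}
    (hv : (Bᵀ * Ldag * B * diagonal a * diagonal c * Bᵀ) *ᵥ v = 0) : Bᵀ *ᵥ v = 0 := by
  have hfix : B * diagonal a * Bᵀ * Ldag * B = B :=
    mul_eq_self_of_mul_diagonal_gram_eq ha hP3 hP1
  have hac : ∀ e, 0 < (a * c) e := fun e => mul_pos (ha e) (hc e)
  have hfactor : B * diagonal (a * c) * Bᵀ =
      (B * diagonal a) * (Bᵀ * Ldag * B * diagonal a * diagonal c * Bᵀ) := by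
    calc B * diagonal (a * c) * Bᵀ
        = (B * diagonal a * Bᵀ * Ldag * B) * diagonal a * diagonal c * Bᵀ := by
          rw [hfix, Matrix.mul_assoc B (diagonal a), diagonal_mul_diagonal]; rfl
      _ = _ := by simp only [Matrix.mul_assoc]
  refine transpose_mulVec_eq_zero_of_dotProduct_mul_diagonal_mul_transpose_mulVec hac ?_
  rw [hfactor, ← mulVec_mulVec, hv, mulVec_zero, dotProduct_zero]

end WeightedGram

end Matrix

section Centering

variable {ι κ : Type*} [Fintype ι]

theorem eq_zero_of_forall_eq_of_sum_eq_zero {v : ι → ℝ} {t : ℝ} (hv : ∀ i, v i = t)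
    (hsum : ∑ i, v i = 0) : v = 0 := by
  funext i
  have : Nonempty ι := ⟨i⟩
  simp only [hv, Finset.sum_const, Finset.card_univ, nsmul_eq_mul, mul_eq_zero,
    Nat.cast_eq_zero, Fintype.card_ne_zero, false_or] at hsum
  rw [hv, hsum, Pi.zero_apply]

theorem exists_sum_eq_zero_mulVec_eq {M : Matrix κ ι ℝ} (hM : M *ᵥ (fun _ => 1) = 0)
    (v₀ : ι → ℝ) : ∃ v : ι → ℝ, ∑ i, v i = 0 ∧ M *ᵥ v = M *ᵥ v₀ := by
  set t := (∑ i, v₀ i) / Fintype.card ι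
  refine ⟨v₀ - t • fun _ => 1, ?_, by rw [mulVec_sub, mulVec_smul, hM, smul_zero, sub_zero]⟩
  rcases isEmpty_or_nonempty ι with hι | hι
  · exact Finset.sum_of_isEmpty _
  · simp only [Pi.sub_apply, Pi.smul_apply, smul_eq_mul, mul_one, Finset.sum_sub_distrib,
      Finset.sum_const, Finset.card_univ, nsmul_eq_mul, t]
    rw [mul_div_cancel₀ _ (by exact_mod_cast Fintype.card_ne_zero), sub_self]

end Centering

theorem kuramoto_differential_isomorphism_general
    (n m : ℕ) (B : Matrix (Fin n) (Fin m) ℝ) (a : Fin m → ℝ)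
    (ha : ∀ e, 0 < a e)
    (hB : ∀ e : Fin m, ∃ i j : Fin n, i ≠ j ∧ B i e = 1 ∧ B j e = -1 ∧
      ∀ k, k ≠ i → k ≠ j → B k e = 0)
    (hconn : ∀ v : Fin n → ℝ, B.transpose.mulVec v = 0 → ∃ c, ∀ i, v i = c)
    -- L† : the Moore–Penrose pseudoinverse of the Laplacian L = B𝒜Bᵀ
    (Ldag : Matrix (Fin n) (Fin n) ℝ)
    (hP1 : (B * Matrix.diagonal a * B.transpose) * Ldag * (B * Matrix.diagonal a * B.transpose)
            = B * Matrix.diagonal a * B.transpose)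
    (hP3 : ((B * Matrix.diagonal a * B.transpose) * Ldag).transpose
            = (B * Matrix.diagonal a * B.transpose) * Ldag)
    (γ : ℝ) (hγ : γ < Real.pi / 2)
    (x : Fin n → ℝ) (hx2 : ∀ e, |B.transpose.mulVec x e| ≤ γ) :
    -- the differential v ↦ 𝒫 [cos(Bᵀx)] Bᵀ v is injective on 1ₙ^⊥ ...
    (∀ v : Fin n → ℝ, (∑ i, v i) = 0 →
      (B.transpose * Ldag * B * Matrix.diagonal a *
        Matrix.diagonal (fun e => Real.cos (B.transpose.mulVec x e)) *
        B.transpose).mulVec v = 0 → v = 0) ∧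
    -- ... hence an isomorphism onto Img(Bᵀ)
    (∀ w : Fin m → ℝ, (∃ y : Fin n → ℝ, w = B.transpose.mulVec y) →
      ∃ v : Fin n → ℝ, (∑ i, v i) = 0 ∧
        (B.transpose * Ldag * B * Matrix.diagonal a *
          Matrix.diagonal (fun e => Real.cos (B.transpose.mulVec x e)) *
          B.transpose).mulVec v = w) := by
  have hcos : ∀ e, 0 < Real.cos ((Bᵀ *ᵥ x) e) := fun e =>
    Real.cos_pos_of_mem_Ioo ⟨by linarith [neg_abs_le ((Bᵀ *ᵥ x) e), hx2 e],
      by linarith [le_abs_self ((Bᵀ *ᵥ x) e), hx2 e]⟩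
  set K := Ldag * B * diagonal a * diagonal fun e => Real.cos ((Bᵀ *ᵥ x) e)
  have hK : Bᵀ * Ldag * B * diagonal a * (diagonal fun e => Real.cos ((Bᵀ *ᵥ x) e)) * Bᵀ =
      Bᵀ * K * Bᵀ := by
    simp only [K, Matrix.mul_assoc]
  have hker : ∀ v, (Bᵀ * K * Bᵀ) *ᵥ v = 0 → Bᵀ *ᵥ v = 0 := fun v hv =>
    transpose_mulVec_eq_zero_of_mulVec_eq_zero ha hcos hP1 hP3 (hK ▸ hv)
  rw [hK]
  refine ⟨fun v hsum hv => ?_, fun w ⟨y, hy⟩ => ?_⟩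
  · obtain ⟨t, ht⟩ := hconn v (hker v hv)
    exact eq_zero_of_forall_eq_of_sum_eq_zero ht hsum
  · obtain ⟨v₀, hv₀⟩ := (range_mulVecLin_mul_mul_eq hker).ge
      (show w ∈ LinearMap.range Bᵀ.mulVecLin from ⟨y, hy.symm⟩)
    have hconst : (Bᵀ * K * Bᵀ) *ᵥ (fun _ => 1) = 0 := by
      rw [← mulVec_mulVec, transpose_mulVec_const_eq_zero (IsIncidence.sum_apply_eq_zero hB),
        mulVec_zero]
    obtain ⟨v, hsum, hv⟩ := exists_sum_eq_zero_mulVec_eq hconst v₀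
    exact ⟨v, hsum, hv.trans hv₀⟩

theorem kuramoto_differential_isomorphism
    (n m : ℕ) (B : Matrix (Fin n) (Fin m) ℝ) (a : Fin m → ℝ)
    (ha : ∀ e, 0 < a e)
    (hB : ∀ e : Fin m, ∃ i j : Fin n, i ≠ j ∧ B i e = 1 ∧ B j e = -1 ∧
      ∀ k, k ≠ i → k ≠ j → B k e = 0)
    (hconn : ∀ v : Fin n → ℝ, B.transpose.mulVec v = 0 → ∃ c, ∀ i, v i = c)
    -- L† : the Moore–Penrose pseudoinverse of the Laplacian L = B𝒜Bᵀ
    (Ldag : Matrix (Fin n) (Fin n) ℝ)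
    (hP1 : (B * Matrix.diagonal a * B.transpose) * Ldag * (B * Matrix.diagonal a * B.transpose)
            = B * Matrix.diagonal a * B.transpose)
    (hP2 : Ldag * (B * Matrix.diagonal a * B.transpose) * Ldag = Ldag)
    (hP3 : ((B * Matrix.diagonal a * B.transpose) * Ldag).transpose
            = (B * Matrix.diagonal a * B.transpose) * Ldag)
    (hP4 : (Ldag * (B * Matrix.diagonal a * B.transpose)).transpose
            = Ldag * (B * Matrix.diagonal a * B.transpose))
    (γ : ℝ) (hγ0 : 0 ≤ γ) (hγ : γ < Real.pi / 2)
    (x : Fin n → ℝ) (hx1 : (∑ i, x i) = 0) (hx2 : ∀ e, |B.transpose.mulVec x e| ≤ γ) :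
    -- the differential v ↦ 𝒫 [cos(Bᵀx)] Bᵀ v is injective on 1ₙ^⊥ ...
    (∀ v : Fin n → ℝ, (∑ i, v i) = 0 →
      (B.transpose * Ldag * B * Matrix.diagonal a *
        Matrix.diagonal (fun e => Real.cos (B.transpose.mulVec x e)) *
        B.transpose).mulVec v = 0 → v = 0) ∧
    -- ... hence an isomorphism onto Img(Bᵀ)
    (∀ w : Fin m → ℝ, (∃ y : Fin n → ℝ, w = B.transpose.mulVec y) →
      ∃ v : Fin n → ℝ, (∑ i, v i) = 0 ∧
        (B.transpose * Ldag * B * Matrix.diagonal a *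
          Matrix.diagonal (fun e => Real.cos (B.transpose.mulVec x e)) *
          B.transpose).mulVec v = w) :=
  kuramoto_differential_isomorphism_general n m B a ha hB hconn Ldag hP1 hP3 γ hγ x hx2
end

section
/- Let G be a connected weighted graph with incidence matrix B, positive weights 𝒜, Laplacian L = B𝒜Bᵀ of rank n−1, and pseudoinverse L†. For z ∈ ℂ^m with ‖z‖_∞ ≤ π/2 (entrywise modulus), the linear map Q_z : Img_ℂ(Bᵀ) → Img_ℂ(Bᵀ), Q_z x = 𝒫[sinc(z)]x, is invertible, and its inverse is given by Q_z⁻¹ =ic BᵀL†_{sinc(z)}B𝒜, where L_{sinc(z)} = B𝒜[sinc(z)]Bᵀ. -/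
/-!
Write `L = B𝒜Bᵀ` and `L_z = B𝒜[sinc z]Bᵀ`, with generalized inverses `P` (`LPL = L`) and `Q`
(`L_z Q L_z = L_z`). Both have the rank of `B`: `L` because `𝒜` is positive definite, `L_z`
because its rank `n - 1` is at least that of `B`, whose columns sum to zero. Equal ranks force
`range L = range B` and `ker L = ker Bᵀ` (likewise for `L_z`), hence `LPB = B`, `BᵀPL = Bᵀ`,
`L_z Q B = B` and `BᵀQL_z = Bᵀ`. From these four identities, both products of `BᵀPB𝒜[sinc z]`
and `BᵀQB𝒜` fix `Bᵀ` by associativity alone.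
-/

open Matrix

/-- The complex sinc function: `sinc z = sin z / z` for `z ≠ 0` and `sinc 0 = 1`. -/
noncomputable def csinc (z : ℂ) : ℂ := if z = 0 then 1 else Complex.sin z / z

namespace Matrix

section GeneralizedInverse

variable {R : Type*} [CommRing R] {l m n : Type*} [Fintype l] [Fintype m]

theorem mul_mul_eq_of_range_le [Fintype n] {M : Matrix l m R} {G : Matrix m l R}
    {N : Matrix l n R} (hG : M * G * M = M)
    (h : LinearMap.range N.mulVecLin ≤ LinearMap.range M.mulVecLin) : M * G * N = N := by
  refine ext_iff_mulVec.mpr fun v => ?_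
  obtain ⟨w, hw⟩ := h ⟨v, rfl⟩
  rw [mulVecLin_apply, mulVecLin_apply] at hw
  rw [← mulVec_mulVec, ← hw, mulVec_mulVec, hG]

theorem mul_mul_eq_of_ker_le {M : Matrix l m R} {G : Matrix m l R} {N : Matrix n m R}
    (hG : M * G * M = M) (h : LinearMap.ker M.mulVecLin ≤ LinearMap.ker N.mulVecLin) :
    N * G * M = N := by
  refine ext_iff_mulVec.mpr fun v => ?_
  have hv : v - (G * M) *ᵥ v ∈ LinearMap.ker M.mulVecLin := by
    rw [LinearMap.mem_ker, mulVecLin_apply, mulVec_sub, mulVec_mulVec, ← Matrix.mul_assoc, hG,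
      sub_self]
  have hNv := h hv
  rw [LinearMap.mem_ker, mulVecLin_apply, mulVec_sub, mulVec_mulVec, sub_eq_zero] at hNv
  rw [Matrix.mul_assoc, hNv]

end GeneralizedInverse

section Rank

variable {K : Type*} [Field K] {l m n : Type*} [Fintype m] [Fintype n]

theorem range_mulVecLin_mul_eq_of_rank_eq {A : Matrix l m K} {C : Matrix m n K}
    (h : (A * C).rank = A.rank) :
    LinearMap.range (A * C).mulVecLin = LinearMap.range A.mulVecLin := by
  refine Submodule.eq_of_le_of_finrank_eq ?_ h
  rw [mulVecLin_mul]
  exact LinearMap.range_comp_le_range _ _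

theorem ker_mulVecLin_mul_eq_of_rank_eq {A : Matrix l m K} {C : Matrix m n K}
    (h : (A * C).rank = C.rank) :
    LinearMap.ker (A * C).mulVecLin = LinearMap.ker C.mulVecLin := by
  refine (Submodule.eq_of_le_of_finrank_eq ?_ ?_).symm
  · rw [mulVecLin_mul]
    exact LinearMap.ker_le_ker_comp _ _
  · have hC := LinearMap.finrank_range_add_finrank_ker C.mulVecLin
    have hAC := LinearMap.finrank_range_add_finrank_ker (A * C).mulVecLin
    rw [rank, rank] at h
    omega

theorem rank_le_card_sub_one_of_sum_apply_eq_zero [Fintype l] (B : Matrix l m K)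
    (hB : ∀ j, ∑ i, B i j = 0) : B.rank ≤ Fintype.card l - 1 := by
  cases isEmpty_or_nonempty l
  · simpa using B.rank_le_card_height
  have hker : Submodule.span K {fun _ => 1} ≤ LinearMap.ker Bᵀ.mulVecLin := by
    rw [Submodule.span_singleton_le_iff_mem, LinearMap.mem_ker, mulVecLin_apply]
    ext j
    simpa [mulVec, dotProduct] using hB j
  have hone : Module.finrank K (Submodule.span K {(fun _ => 1 : l → K)}) = 1 :=
    finrank_span_singleton (Function.ne_iff.mpr ⟨Classical.arbitrary l, one_ne_zero⟩)
  have hrn := LinearMap.finrank_range_add_finrank_ker Bᵀ.mulVecLin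
  have hle := Submodule.finrank_mono hker
  rw [Module.finrank_fintype_fun_eq_card] at hrn
  rw [← rank_transpose, rank]
  omega

open scoped ComplexOrder in
theorem rank_mul_diagonal_mul_conjTranspose {𝕜 : Type*} [RCLike 𝕜] [Fintype l] [DecidableEq m]
    (B : Matrix l m 𝕜) {a : m → ℝ} (ha : ∀ e, 0 < a e) :
    (B * diagonal (fun e => (a e : 𝕜)) * Bᴴ).rank = B.rank := by
  set D : Matrix m m 𝕜 := diagonal fun e => (√(a e) : 𝕜)
  have hD : D * Dᴴ = diagonal fun e => (a e : 𝕜) := by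
    rw [diagonal_conjTranspose, diagonal_mul_diagonal]
    congr 1
    ext e
    rw [Pi.star_apply, RCLike.star_def, RCLike.conj_ofReal, ← RCLike.ofReal_mul,
      Real.mul_self_sqrt (ha e).le]
  have hD_det : IsUnit D.det := by
    rw [det_diagonal, isUnit_iff_ne_zero, Finset.prod_ne_zero_iff]
    exact fun e _ => RCLike.ofReal_ne_zero.mpr (Real.sqrt_pos.mpr (ha e)).ne'
  calc (B * diagonal (fun e => (a e : 𝕜)) * Bᴴ).rank = (B * D * (B * D)ᴴ).rank := by
        rw [conjTranspose_mul, ← hD]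
        simp only [Matrix.mul_assoc]
    _ = B.rank := by rw [rank_self_mul_conjTranspose, rank_mul_eq_left_of_isUnit_det D B hD_det]

theorem generalizedInverse_absorb_of_rank_eq [Fintype l] {B : Matrix l m K} {X : Matrix m m K}
    {G : Matrix l l K} (hG : B * X * Bᵀ * G * (B * X * Bᵀ) = B * X * Bᵀ)
    (h : (B * X * Bᵀ).rank = B.rank) :
    B * X * Bᵀ * G * B = B ∧ Bᵀ * G * (B * X * Bᵀ) = Bᵀ := by
  refine ⟨mul_mul_eq_of_range_le hG ?_, mul_mul_eq_of_ker_le hG ?_⟩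
  · rw [Matrix.mul_assoc B] at h ⊢
    exact (range_mulVecLin_mul_eq_of_rank_eq h).ge
  · exact (ker_mulVecLin_mul_eq_of_rank_eq (h.trans (rank_transpose B).symm)).le

end Rank

theorem mul_mul_eq_of_absorb {R : Type*} [Semiring R] {l m : Type*} [Fintype l]
    [Fintype m] {B : Matrix l m R} {Bt : Matrix m l R} {A S : Matrix m m R} {P Q : Matrix l l R}
    (hP₁ : B * A * Bt * P * B = B) (hP₂ : Bt * P * (B * A * Bt) = Bt)
    (hQ₁ : B * (A * S) * Bt * Q * B = B) (hQ₂ : Bt * Q * (B * (A * S) * Bt) = Bt) :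
    Bt * Q * B * A * (Bt * P * B * A * S) * Bt = Bt ∧
      Bt * P * B * A * S * (Bt * Q * B * A) * Bt = Bt := by
  constructor
  · calc _ = Bt * Q * (B * A * Bt * P * B) * A * S * Bt := by simp only [Matrix.mul_assoc]
      _ = Bt := by rw [hP₁]; simpa only [Matrix.mul_assoc] using hQ₂
  · calc _ = Bt * P * (B * (A * S) * Bt * Q * B) * A * Bt := by simp only [Matrix.mul_assoc]
      _ = Bt := by rw [hQ₁]; simpa only [Matrix.mul_assoc] using hP₂

theorem conjTranspose_map_ofReal_s13 {l m : Type*} (B : Matrix l m ℝ) :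
    (B.map ((↑) : ℝ → ℂ))ᴴ = (B.map ((↑) : ℝ → ℂ))ᵀ := by
  ext i j
  simp

end Matrix

theorem Qz_invertible_general
    (n m : ℕ) (B : Matrix (Fin n) (Fin m) ℝ) (a : Fin m → ℝ)
    (ha : ∀ e, 0 < a e)
    (hB : ∀ e : Fin m, ∃ i j : Fin n, i ≠ j ∧ B i e = 1 ∧ B j e = -1 ∧
      ∀ k, k ≠ i → k ≠ j → B k e = 0)
    -- L† : Moore–Penrose pseudoinverse of the Laplacian L = B𝒜Bᵀ
    (Ldag : Matrix (Fin n) (Fin n) ℝ)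
    (hL1 : (B * Matrix.diagonal a * B.transpose) * Ldag * (B * Matrix.diagonal a * B.transpose)
            = B * Matrix.diagonal a * B.transpose)
    (z : Fin m → ℂ)
    -- L_{sinc(z)} = B𝒜[sinc(z)]Bᵀ (complexified)
    (Lz : Matrix (Fin n) (Fin n) ℂ)
    (hLz : Lz = (B.map Complex.ofReal) * Matrix.diagonal (fun e => (a e : ℂ)) *
      Matrix.diagonal (fun e => csinc (z e)) * (B.map Complex.ofReal).transpose)
    -- rank result: rank(L_{sinc(z)}) = n − 1
    (hrank : Lz.rank = n - 1)
    -- L†_{sinc(z)} : Moore–Penrose pseudoinverse of L_{sinc(z)}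
    (Lzdag : Matrix (Fin n) (Fin n) ℂ)
    (hLz1 : Lz * Lzdag * Lz = Lz) :
    -- Q_z is invertible on Img_ℂ(Bᵀ) with inverse Bᵀ L†_{sinc(z)} B 𝒜
    ∀ x : Fin m → ℂ, (∃ y : Fin n → ℂ, x = (B.map Complex.ofReal).transpose.mulVec y) →
      ((B.map Complex.ofReal).transpose * Lzdag * (B.map Complex.ofReal) *
          Matrix.diagonal (fun e => (a e : ℂ))).mulVec
        (((B.map Complex.ofReal).transpose * Ldag.map Complex.ofReal *
            (B.map Complex.ofReal) * Matrix.diagonal (fun e => (a e : ℂ)) *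
            Matrix.diagonal (fun e => csinc (z e))).mulVec x) = x ∧
      ((B.map Complex.ofReal).transpose * Ldag.map Complex.ofReal *
          (B.map Complex.ofReal) * Matrix.diagonal (fun e => (a e : ℂ)) *
          Matrix.diagonal (fun e => csinc (z e))).mulVec
        (((B.map Complex.ofReal).transpose * Lzdag * (B.map Complex.ofReal) *
            Matrix.diagonal (fun e => (a e : ℂ))).mulVec x) = x := by
  rintro x ⟨y, rfl⟩
  subst hLz
  set Bc := B.map Complex.ofReal
  set A := diagonal fun e => (a e : ℂ)
  set S := diagonal fun e => csinc (z e)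
  have hL_rank : (Bc * A * Bcᵀ).rank = Bc.rank := by
    rw [← conjTranspose_map_ofReal_s13]
    exact rank_mul_diagonal_mul_conjTranspose Bc ha
  have hBc_sum : ∀ e, ∑ i, Bc i e = 0 := fun e => by
    obtain ⟨i, j, hij, hi, hj, h0⟩ := hB e
    rw [Fintype.sum_eq_add i j hij fun k hk => by simp [Bc, h0 k hk.1 hk.2]]
    simp [Bc, hi, hj]
  rw [Matrix.mul_assoc Bc A S] at hrank hLz1
  have hLz_rank : (Bc * (A * S) * Bcᵀ).rank = Bc.rank := by
    refine le_antisymm ((rank_mul_le_left _ _).trans (rank_mul_le_left _ _)) ?_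
    simpa [hrank] using rank_le_card_sub_one_of_sum_apply_eq_zero Bc hBc_sum
  have hLdag : Bc * A * Bcᵀ * Ldag.map Complex.ofReal * (Bc * A * Bcᵀ) = Bc * A * Bcᵀ := by
    have h := congrArg (Matrix.map · Complex.ofRealHom) hL1
    simp only [Matrix.map_mul, diagonal_map (map_zero _)] at h
    exact h
  obtain ⟨hP₁, hP₂⟩ := generalizedInverse_absorb_of_rank_eq hLdag hL_rank
  obtain ⟨hQ₁, hQ₂⟩ := generalizedInverse_absorb_of_rank_eq hLz1 hLz_rank
  obtain ⟨h₁, h₂⟩ := mul_mul_eq_of_absorb hP₁ hP₂ hQ₁ hQ₂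
  simp only [mulVec_mulVec, ← Matrix.mul_assoc _ _ Bcᵀ, h₁, h₂, and_self]

theorem Qz_invertible
    (n m : ℕ) (B : Matrix (Fin n) (Fin m) ℝ) (a : Fin m → ℝ)
    (ha : ∀ e, 0 < a e)
    (hB : ∀ e : Fin m, ∃ i j : Fin n, i ≠ j ∧ B i e = 1 ∧ B j e = -1 ∧
      ∀ k, k ≠ i → k ≠ j → B k e = 0)
    (hconn : ∀ v : Fin n → ℝ, B.transpose.mulVec v = 0 → ∃ c, ∀ i, v i = c)
    -- L† : Moore–Penrose pseudoinverse of the Laplacian L = B𝒜Bᵀ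
    (Ldag : Matrix (Fin n) (Fin n) ℝ)
    (hL1 : (B * Matrix.diagonal a * B.transpose) * Ldag * (B * Matrix.diagonal a * B.transpose)
            = B * Matrix.diagonal a * B.transpose)
    (hL2 : Ldag * (B * Matrix.diagonal a * B.transpose) * Ldag = Ldag)
    (hL3 : ((B * Matrix.diagonal a * B.transpose) * Ldag).transpose
            = (B * Matrix.diagonal a * B.transpose) * Ldag)
    (hL4 : (Ldag * (B * Matrix.diagonal a * B.transpose)).transpose
            = Ldag * (B * Matrix.diagonal a * B.transpose))
    (z : Fin m → ℂ) (hz : ∀ e, ‖z e‖ ≤ Real.pi / 2)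
    -- L_{sinc(z)} = B𝒜[sinc(z)]Bᵀ (complexified)
    (Lz : Matrix (Fin n) (Fin n) ℂ)
    (hLz : Lz = (B.map Complex.ofReal) * Matrix.diagonal (fun e => (a e : ℂ)) *
      Matrix.diagonal (fun e => csinc (z e)) * (B.map Complex.ofReal).transpose)
    -- rank result: rank(L_{sinc(z)}) = n − 1
    (hrank : Lz.rank = n - 1)
    -- L†_{sinc(z)} : Moore–Penrose pseudoinverse of L_{sinc(z)}
    (Lzdag : Matrix (Fin n) (Fin n) ℂ)
    (hLz1 : Lz * Lzdag * Lz = Lz) (hLz2 : Lzdag * Lz * Lzdag = Lzdag)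
    (hLz3 : (Lz * Lzdag).conjTranspose = Lz * Lzdag)
    (hLz4 : (Lzdag * Lz).conjTranspose = Lzdag * Lz) :
    -- Q_z is invertible on Img_ℂ(Bᵀ) with inverse Bᵀ L†_{sinc(z)} B 𝒜
    ∀ x : Fin m → ℂ, (∃ y : Fin n → ℂ, x = (B.map Complex.ofReal).transpose.mulVec y) →
      ((B.map Complex.ofReal).transpose * Lzdag * (B.map Complex.ofReal) *
          Matrix.diagonal (fun e => (a e : ℂ))).mulVec
        (((B.map Complex.ofReal).transpose * Ldag.map Complex.ofReal *
            (B.map Complex.ofReal) * Matrix.diagonal (fun e => (a e : ℂ)) *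
            Matrix.diagonal (fun e => csinc (z e))).mulVec x) = x ∧
      ((B.map Complex.ofReal).transpose * Ldag.map Complex.ofReal *
          (B.map Complex.ofReal) * Matrix.diagonal (fun e => (a e : ℂ)) *
          Matrix.diagonal (fun e => csinc (z e))).mulVec
        (((B.map Complex.ofReal).transpose * Lzdag * (B.map Complex.ofReal) *
            Matrix.diagonal (fun e => (a e : ℂ))).mulVec x) = x :=
  Qz_invertible_general n m B a ha hB Ldag hL1 z Lz hLz hrank Lzdag hLz1
end

section
/- Let G be a connected weighted graph with cutset projection 𝒫 = BᵀL†B𝒜. Then Ker(𝒫) = Ker(B𝒜) and Img(𝒫) = Img(Bᵀ), and 𝒫 is idempotent: 𝒫² = 𝒫. -/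
open Matrix

lemma aux_NDNt_zero {n m : ℕ} (N : Matrix (Fin n) (Fin m) ℝ) (a : Fin m → ℝ)
    (ha : ∀ e, 0 < a e) (h : N * Matrix.diagonal a * N.transpose = 0) : N = 0 := by
  ext i e
  have hii := congrFun (congrFun h i) i
  rw [Matrix.mul_apply] at hii
  simp only [Matrix.mul_diagonal, Matrix.transpose_apply, Matrix.zero_apply] at hii
  have hterm : ∀ x ∈ Finset.univ, (0:ℝ) ≤ N i x * a x * N i x := by
    intro x _
    have hx : N i x * a x * N i x = a x * (N i x)^2 := by ring
    rw [hx]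
    exact mul_nonneg (ha x).le (sq_nonneg _)
  have h0 := (Finset.sum_eq_zero_iff_of_nonneg hterm).mp hii e (Finset.mem_univ e)
  have h2 : N i e * N i e * a e = 0 := by linear_combination h0
  have h3 : N i e * N i e = 0 := by
    rcases mul_eq_zero.mp h2 with h' | h'
    · exact h'
    · exact absurd h' (ne_of_gt (ha e))
  simpa using mul_self_eq_zero.mp h3


theorem cutset_projection_properties
    (n m : ℕ) (B : Matrix (Fin n) (Fin m) ℝ) (a : Fin m → ℝ)
    (ha : ∀ e, 0 < a e)
    (hB : ∀ e : Fin m, ∃ i j : Fin n, i ≠ j ∧ B i e = 1 ∧ B j e = -1 ∧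
      ∀ k, k ≠ i → k ≠ j → B k e = 0)
    (hconn : ∀ v : Fin n → ℝ, B.transpose.mulVec v = 0 → ∃ c, ∀ i, v i = c)
    -- L† : Moore–Penrose pseudoinverse of the Laplacian L = B𝒜Bᵀ
    (Ldag : Matrix (Fin n) (Fin n) ℝ)
    (hL1 : (B * Matrix.diagonal a * B.transpose) * Ldag * (B * Matrix.diagonal a * B.transpose)
            = B * Matrix.diagonal a * B.transpose)
    (hL2 : Ldag * (B * Matrix.diagonal a * B.transpose) * Ldag = Ldag)
    (hL3 : ((B * Matrix.diagonal a * B.transpose) * Ldag).transpose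
            = (B * Matrix.diagonal a * B.transpose) * Ldag)
    (hL4 : (Ldag * (B * Matrix.diagonal a * B.transpose)).transpose
            = Ldag * (B * Matrix.diagonal a * B.transpose))
    -- 𝒫 = Bᵀ L† B 𝒜
    (P : Matrix (Fin m) (Fin m) ℝ)
    (hP : P = B.transpose * Ldag * B * Matrix.diagonal a) :
    -- Ker(𝒫) = Ker(B𝒜)
    (∀ v : Fin m → ℝ, P.mulVec v = 0 ↔ (B * Matrix.diagonal a).mulVec v = 0) ∧
    -- Img(𝒫) = Img(Bᵀ)
    (∀ w : Fin m → ℝ,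
      (∃ v : Fin m → ℝ, w = P.mulVec v) ↔ (∃ y : Fin n → ℝ, w = B.transpose.mulVec y)) ∧
    -- 𝒫 is idempotent
    P * P = P := by
  obtain ⟨D, hDdef⟩ : ∃ D', D' = Matrix.diagonal a := ⟨_, rfl⟩
  rw [← hDdef] at hL1 hL2 hL3 hL4 hP ⊢
  obtain ⟨L, hLdef⟩ : ∃ L', L' = B * D * B.transpose := ⟨_, rfl⟩
  rw [← hLdef] at hL1 hL2 hL3 hL4
  have hDsym : D.transpose = D := by rw [hDdef, Matrix.diagonal_transpose]
  have hLsym : L.transpose = L := by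
    rw [hLdef, Matrix.transpose_mul, Matrix.transpose_mul, Matrix.transpose_transpose,
      hDsym, Matrix.mul_assoc]
  have hYsym : L * Ldag.transpose = Ldag * L := by
    calc L * Ldag.transpose = (Ldag * L.transpose).transpose := by
          rw [Matrix.transpose_mul, Matrix.transpose_transpose]
      _ = (Ldag * L).transpose := by rw [hLsym]
      _ = Ldag * L := hL4
  have hAYA : L * Ldag.transpose * L = L := by
    have h := congrArg Matrix.transpose hL1
    rw [Matrix.transpose_mul, Matrix.transpose_mul, hLsym] at h
    calc L * Ldag.transpose * L = L * (Ldag.transpose * L) := by rw [Matrix.mul_assoc]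
      _ = L := h
  have hcomm : L * Ldag = Ldag * L := by
    have h1 : (L * Ldag) * (L * Ldag.transpose) = L * Ldag.transpose := by
      calc (L * Ldag) * (L * Ldag.transpose) = (L * Ldag * L) * Ldag.transpose := by
            rw [Matrix.mul_assoc, Matrix.mul_assoc, Matrix.mul_assoc]
        _ = L * Ldag.transpose := by rw [hL1]
    have h2 : (L * Ldag.transpose) * (L * Ldag) = ((L * Ldag) * (L * Ldag.transpose)).transpose := by
      rw [hYsym, Matrix.transpose_mul, hL4, hL3]
    have h3 : L * Ldag = (L * Ldag.transpose) * (L * Ldag) := by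
      calc L * Ldag = (L * Ldag.transpose * L) * Ldag := by rw [hAYA]
        _ = (L * Ldag.transpose) * (L * Ldag) := by rw [Matrix.mul_assoc, Matrix.mul_assoc]
    calc L * Ldag = (L * Ldag.transpose) * (L * Ldag) := h3
      _ = ((L * Ldag) * (L * Ldag.transpose)).transpose := h2
      _ = (L * Ldag.transpose).transpose := by rw [h1]
      _ = (Ldag * L).transpose := by rw [hYsym]
      _ = Ldag * L := hL4
  -- key identity: Ldag * L * B = B
  have e1 : B * D * B.transpose = L := hLdef.symm
  have e2 : B * D * (B.transpose * (Ldag * L)) = L := by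
    rw [← Matrix.mul_assoc, e1, ← Matrix.mul_assoc, hL1]
  have e3 : Ldag * L * B * D * B.transpose = L := by
    rw [Matrix.mul_assoc (Ldag * L) B D, Matrix.mul_assoc (Ldag * L) (B * D) B.transpose,
      e1, ← hcomm, hL1]
  have e4 : Ldag * L * B * D * (B.transpose * (Ldag * L)) = L := by
    rw [← Matrix.mul_assoc, e3, ← Matrix.mul_assoc, hL1]
  have hEB : Ldag * L * B = B := by
    have hT : (B - Ldag * L * B).transpose = B.transpose - B.transpose * (Ldag * L) := by
      rw [Matrix.transpose_sub, Matrix.transpose_mul, hL4]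
    have hN : (B - Ldag * L * B) * D * (B - Ldag * L * B).transpose = 0 := by
      rw [hT, Matrix.sub_mul, Matrix.sub_mul, Matrix.mul_sub, Matrix.mul_sub,
        e1, e2, e3, e4]
      simp
    have h0 := aux_NDNt_zero _ a ha (by rw [hDdef] at hN; exact hN)
    exact (sub_eq_zero.mp h0).symm
  have hBtE : B.transpose * Ldag * L = B.transpose := by
    have h := congrArg Matrix.transpose hEB
    rw [Matrix.transpose_mul, hL4] at h
    rw [Matrix.mul_assoc]
    exact h
  -- universally quantified absorption lemmas (right-assoc normal form)
  have g1 : ∀ (p : ℕ) (X : Matrix (Fin n) (Fin p) ℝ),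
      B * (D * (B.transpose * X)) = L * X := by
    intro p X
    rw [hLdef]
    simp only [Matrix.mul_assoc]
  have g3 : ∀ (p : ℕ) (X : Matrix (Fin n) (Fin p) ℝ),
      Ldag * (L * (Ldag * X)) = Ldag * X := by
    intro p X
    simp only [← Matrix.mul_assoc]
    rw [hL2]
  have g4 : ∀ (p : ℕ) (X : Matrix (Fin m) (Fin p) ℝ),
      Ldag * (L * (B * X)) = B * X := by
    intro p X
    simp only [← Matrix.mul_assoc]
    rw [hEB]
  have g6 : ∀ (p : ℕ) (X : Matrix (Fin n) (Fin p) ℝ),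
      L * (Ldag * X) = Ldag * (L * X) := by
    intro p X
    simp only [← Matrix.mul_assoc]
    rw [hcomm]
  have hPfac : P = B.transpose * (Ldag * (B * D)) := by
    rw [hP]; simp only [Matrix.mul_assoc]
  have hBDfold : B * (D * B.transpose) = L := by
    rw [hLdef, Matrix.mul_assoc]
  refine ⟨?_, ?_, ?_⟩
  · -- kernel
    intro v
    constructor
    · intro hv
      have key : B * D * P = B * D := by
        rw [hP]
        simp only [Matrix.mul_assoc]
        rw [g1, g6, g4]
      calc (B * D).mulVec v = (B * D * P).mulVec v := by rw [key]
        _ = (B * D).mulVec (P.mulVec v) := by rw [← Matrix.mulVec_mulVec]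
        _ = (B * D).mulVec 0 := by rw [hv]
        _ = 0 := Matrix.mulVec_zero _
    · intro hv
      calc P.mulVec v = (B.transpose * Ldag).mulVec ((B * D).mulVec v) := by
            rw [hPfac, Matrix.mulVec_mulVec, Matrix.mul_assoc]
        _ = (B.transpose * Ldag).mulVec 0 := by rw [hv]
        _ = 0 := Matrix.mulVec_zero _
  · -- image
    intro w
    constructor
    · rintro ⟨v, rfl⟩
      exact ⟨(Ldag * (B * D)).mulVec v, by rw [hPfac, ← Matrix.mulVec_mulVec]⟩
    · rintro ⟨y, rfl⟩
      refine ⟨B.transpose.mulVec y, ?_⟩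
      have key : P * B.transpose = B.transpose := by
        rw [hP]
        simp only [Matrix.mul_assoc]
        rw [hBDfold]
        simp only [← Matrix.mul_assoc]
        exact hBtE
      rw [Matrix.mulVec_mulVec, key]
  · -- idempotent
    rw [hP]
    simp only [Matrix.mul_assoc]
    rw [g1, g3]
end

section
/- For the complete graph on n ≥ 2 nodes with unit weights, the even-indexed coefficients in the Taylor expansion of the inverse Kuramoto map vanish: if Σ_j A_j(η) is a formal power series with A_j homogeneous of degree j satisfying η = 𝒫 Σ_{k≥0} ((−1)^k/(2k+1)!)(Σ_i A_i(η))^{∘(2k+1)}, then matching all even-degree homogeneous terms gives A_{2j}(η) = 0 for every j ≥ 1. -/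
open Matrix

/-- Edges of the complete graph on `n` nodes. -/
def CompleteEdge (n : ℕ) := {p : Fin n × Fin n // p.1 < p.2}

instance (n : ℕ) : Fintype (CompleteEdge n) := by unfold CompleteEdge; infer_instance
instance (n : ℕ) : DecidableEq (CompleteEdge n) := by unfold CompleteEdge; infer_instance

/-- Oriented incidence matrix of the complete graph on `n` nodes. -/
def completeIncidence (n : ℕ) : Matrix (Fin n) (CompleteEdge n) ℝ :=
  Matrix.of fun i e => if i = e.1.1 then 1 else if i = e.1.2 then -1 else 0

/-- Compositions of `d` into `2*k+1` positive parts (ordered tuples). -/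
def posCompositions (k d : ℕ) : Finset (Fin (2 * k + 1) → ℕ) :=
  (Fintype.piFinset fun _ => Finset.range (d + 1)).filter
    (fun α => (∀ i, 1 ≤ α i) ∧ ∑ i, α i = d)

/-!
Strong induction on `j`. In the degree-`2j` identity, a product indexed by a composition of
`2j` into an odd number `2k + 1 ≥ 3` of parts always contains an even part, which is smaller
than `2j` and hence already known to vanish; only the `k = 0` term `A (2j)` survives, so
`𝒫 A (2j) = 0`. Since `A (2j)` lies in the range of `Bᵀ`, on which `𝒫 = Bᵀ L† B` is injective
(because `L L† L = L` with `L = B Bᵀ`), `A (2j) = 0`.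
-/

/-- The degree-`d` homogeneous component of `sin (Σᵢ Aᵢ) = Σₖ ((-1)ᵏ / (2k+1)!) (Σᵢ Aᵢ)^{∘(2k+1)}`;
only `k < d` contributes since `A₀ = 0`. -/
noncomputable def sinSeriesComponent {E : Type*} (A : ℕ → E → ℝ) (d : ℕ) : E → ℝ :=
  ∑ k ∈ Finset.range d, ∑ α ∈ posCompositions k d,
    ((-1 : ℝ) ^ k / (Nat.factorial (2 * k + 1))) • (fun e => ∏ i, A (α i) e)

section posCompositions

variable {k d : ℕ} {α : Fin (2 * k + 1) → ℕ}

lemma mem_posCompositions : α ∈ posCompositions k d ↔ (∀ i, 1 ≤ α i) ∧ ∑ i, α i = d := by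
  simp only [posCompositions, Finset.mem_filter, Fintype.mem_piFinset, Finset.mem_range,
    and_iff_right_iff_imp]
  rintro ⟨-, rfl⟩ i
  exact Nat.lt_succ_of_le (Finset.single_le_sum (fun _ _ => Nat.zero_le _) (Finset.mem_univ i))

lemma posCompositions_zero (hd : 1 ≤ d) : posCompositions 0 d = {fun _ => d} := by
  ext α
  simp only [mem_posCompositions, Finset.mem_singleton]
  constructor
  · rintro ⟨-, rfl⟩
    funext i
    simp [Fin.fin_one_eq_zero i]
  · rintro rfl
    exact ⟨fun _ => hd, by simp⟩

lemma exists_even_of_mem_posCompositions (hα : α ∈ posCompositions k d) (hd : Even d) :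
    ∃ i, Even (α i) := by
  by_contra! hodd
  have hsum := (mem_posCompositions.mp hα).2
  have : Odd (∑ i, α i) := by
    rw [Finset.odd_sum_iff_odd_card_odd]
    simp only [Nat.not_even_iff_odd.mp (hodd _), Finset.filter_true, Finset.card_univ,
      Fintype.card_fin]
    exact odd_two_mul_add_one k
  exact Nat.not_even_iff_odd.mpr (hsum ▸ this) hd

lemma lt_of_mem_posCompositions (hα : α ∈ posCompositions k d) (hk : 1 ≤ k)
    (i : Fin (2 * k + 1)) : α i < d := by
  obtain ⟨hpos, hsum⟩ := mem_posCompositions.mp hα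
  have hrest : 2 * k ≤ ∑ i' ∈ Finset.univ.erase i, α i' := by
    simpa [Finset.card_erase_of_mem] using
      Finset.card_nsmul_le_sum (Finset.univ.erase i) α 1 (fun i' _ => hpos i')
  have := Finset.add_sum_erase Finset.univ α (Finset.mem_univ i)
  omega

end posCompositions

lemma sinSeriesComponent_eq_self {E : Type*} {A : ℕ → E → ℝ} {d : ℕ} (hd : 0 < d)
    (heven : Even d) (hA : ∀ m, 0 < m → m < d → Even m → A m = 0) :
    sinSeriesComponent A d = A d := by
  unfold sinSeriesComponent
  rw [Finset.sum_eq_single_of_mem 0 (Finset.mem_range.mpr hd)]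
  · rw [posCompositions_zero hd, Finset.sum_singleton]
    funext e
    simp
  · intro k _ hk
    refine Finset.sum_eq_zero fun α hα => ?_
    obtain ⟨i, hi⟩ := exists_even_of_mem_posCompositions hα heven
    have hAi : A (α i) = 0 := hA _ ((mem_posCompositions.mp hα).1 i)
      (lt_of_mem_posCompositions hα (Nat.one_le_iff_ne_zero.mpr hk) i) hi
    have : (fun e => ∏ i, A (α i) e) = 0 :=
      funext fun e => Finset.prod_eq_zero (Finset.mem_univ i) (by rw [hAi]; rfl)
    rw [this, smul_zero]

lemma transpose_mulVec_eq_zero_of_projection_mulVec_eq_zero {R m ι : Type*} [Fintype m]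
    [Fintype ι] [Field R] [LinearOrder R] [IsStrictOrderedRing R] {B : Matrix m ι R}
    {L : Matrix m m R} (hL : B * Bᵀ * L * (B * Bᵀ) = B * Bᵀ) {y : m → R}
    (h : (Bᵀ * L * B) *ᵥ (Bᵀ *ᵥ y) = 0) : Bᵀ *ᵥ y = 0 := by
  have hker : (Bᵀᵀ * Bᵀ) *ᵥ y = 0 := by
    calc (Bᵀᵀ * Bᵀ) *ᵥ y = (B * Bᵀ * L * (B * Bᵀ)) *ᵥ y := by rw [hL, transpose_transpose]
      _ = B *ᵥ ((Bᵀ * L * B) *ᵥ (Bᵀ *ᵥ y)) := by simp only [mulVec_mulVec, Matrix.mul_assoc]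
      _ = 0 := by rw [h, mulVec_zero]
  have := (ker_mulVecLin_transpose_mul_self Bᵀ).le (LinearMap.mem_ker.mpr hker)
  exact LinearMap.mem_ker.mp this

theorem even_terms_vanish_general
    (n : ℕ)
    -- L† : Moore–Penrose pseudoinverse of the Laplacian L = BBᵀ (unit weights)
    (Ldag : Matrix (Fin n) (Fin n) ℝ)
    (hL1 : (completeIncidence n * (completeIncidence n).transpose) * Ldag *
        (completeIncidence n * (completeIncidence n).transpose)
      = completeIncidence n * (completeIncidence n).transpose)
    -- 𝒫 = Bᵀ L† B (unit weights)
    (P : Matrix (CompleteEdge n) (CompleteEdge n) ℝ)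
    (hP : P = (completeIncidence n).transpose * Ldag * completeIncidence n)
    (η : CompleteEdge n → ℝ)
    -- A_j : the homogeneous components (of degree j) of the formal power series
    (A : ℕ → (CompleteEdge n → ℝ))
    -- each A_j takes values in Img(Bᵀ), being a component of Bᵀ f_K⁻¹
    (hImg : ∀ j, ∃ y : Fin n → ℝ, A j = (completeIncidence n).transpose.mulVec y)
    -- matching homogeneous terms of degree d on both sides of
    -- η = 𝒫 Σ_{k≥0} ((−1)^k/(2k+1)!) (Σ_i A_i(η))^{∘(2k+1)}
    (hmatch : ∀ d : ℕ,
      (if d = 1 then η else 0) =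
        P.mulVec (∑ k ∈ Finset.range d, ∑ α ∈ posCompositions k d,
          ((-1 : ℝ) ^ k / (Nat.factorial (2 * k + 1))) •
            (fun e => ∏ i, A (α i) e))) :
    ∀ j : ℕ, 1 ≤ j → A (2 * j) = 0 := by
  intro j
  induction j using Nat.strong_induction_on with
  | _ j IH =>
  intro hj
  have hlower : ∀ m, 0 < m → m < 2 * j → Even m → A m = 0 := by
    rintro m hm hmj ⟨l, rfl⟩
    rw [← two_mul]
    exact IH l (by omega) (by omega)
  have hproj : P *ᵥ A (2 * j) = 0 := by
    have := hmatch (2 * j)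
    rw [if_neg (by omega)] at this
    change 0 = P *ᵥ sinSeriesComponent A (2 * j) at this
    rw [sinSeriesComponent_eq_self (by omega) (even_two_mul j) hlower] at this
    exact this.symm
  obtain ⟨y, hy⟩ := hImg (2 * j)
  rw [hy, hP] at hproj
  rw [hy]
  exact transpose_mulVec_eq_zero_of_projection_mulVec_eq_zero hL1 hproj

theorem even_terms_vanish
    (n : ℕ) (hn : 2 ≤ n)
    -- L† : Moore–Penrose pseudoinverse of the Laplacian L = BBᵀ (unit weights)
    (Ldag : Matrix (Fin n) (Fin n) ℝ)
    (hL1 : (completeIncidence n * (completeIncidence n).transpose) * Ldag *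
        (completeIncidence n * (completeIncidence n).transpose)
      = completeIncidence n * (completeIncidence n).transpose)
    (hL2 : Ldag * (completeIncidence n * (completeIncidence n).transpose) * Ldag = Ldag)
    (hL3 : ((completeIncidence n * (completeIncidence n).transpose) * Ldag).transpose
      = (completeIncidence n * (completeIncidence n).transpose) * Ldag)
    (hL4 : (Ldag * (completeIncidence n * (completeIncidence n).transpose)).transpose
      = Ldag * (completeIncidence n * (completeIncidence n).transpose))
    -- 𝒫 = Bᵀ L† B (unit weights)
    (P : Matrix (CompleteEdge n) (CompleteEdge n) ℝ)
    (hP : P = (completeIncidence n).transpose * Ldag * completeIncidence n)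
    (η : CompleteEdge n → ℝ)
    -- A_j : the homogeneous components (of degree j) of the formal power series
    (A : ℕ → (CompleteEdge n → ℝ))
    (hA0 : A 0 = 0)
    -- each A_j takes values in Img(Bᵀ), being a component of Bᵀ f_K⁻¹
    (hImg : ∀ j, ∃ y : Fin n → ℝ, A j = (completeIncidence n).transpose.mulVec y)
    -- matching homogeneous terms of degree d on both sides of
    -- η = 𝒫 Σ_{k≥0} ((−1)^k/(2k+1)!) (Σ_i A_i(η))^{∘(2k+1)}
    (hmatch : ∀ d : ℕ,
      (if d = 1 then η else 0) =
        P.mulVec (∑ k ∈ Finset.range d, ∑ α ∈ posCompositions k d,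
          ((-1 : ℝ) ^ k / (Nat.factorial (2 * k + 1))) •
            (fun e => ∏ i, A (α i) e))) :
    ∀ j : ℕ, 1 ≤ j → A (2 * j) = 0 :=
  even_terms_vanish_general n Ldag hL1 P hP η A hImg hmatch
end
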